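/- Every scale group P acting on T_{q+1} admits a P-labelling: there exist bijections c_v from the directed edges out of each vertex v to {0,…,q} satisfying conditions (1), (2) and (3) of the definition of a P-labelling. -/

import Mathlib

namespace Scale

/-- A vertex of the `(q+1)`-regular tree `T_{q+1}`: a level `n ∈ ℤ` together with a
labelling `ℤ → Fin q` which vanishes above the level and for all sufficiently small indices. -/
@[ext] structure Vertex (q : ℕ) where
  level : ℤ
  lab : ℤ → Fin q
  zero_gt : ∀ i : ℤ, level < i → (lab i : ℕ) = 0
  bdd : ∃ N : ℤ, ∀ i : ℤ, i < N → (lab i : ℕ) = 0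

namespace Vertex

variable {q : ℕ} [NeZero q]

/-- The parent `v⁺` of a vertex. -/
def parent (v : Vertex q) : Vertex q where
  level := v.level - 1
  lab := fun i => if v.level - 1 < i then 0 else v.lab i
  zero_gt := by intro i hi; simp [hi]
  bdd := by
    obtain ⟨N, hN⟩ := v.bdd
    refine ⟨N, fun i hi => ?_⟩
    by_cases h : v.level - 1 < i
    · simp [h]
    · simp [h, hN i hi]

/-- The child `vj` of a vertex `v`. -/
def child (v : Vertex q) (j : Fin q) : Vertex q where
  level := v.level + 1
  lab := fun i => if i = v.level + 1 then j else v.lab i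
  zero_gt := by
    intro i hi
    have h1 : i ≠ v.level + 1 := by omega
    simp [h1, v.zero_gt i (by omega)]
  bdd := by
    obtain ⟨N, hN⟩ := v.bdd
    refine ⟨min N (v.level + 1), fun i hi => ?_⟩
    have h1 : i < N := lt_of_lt_of_le hi (min_le_left _ _)
    have h2 : i < v.level + 1 := lt_of_lt_of_le hi (min_le_right _ _)
    have h3 : i ≠ v.level + 1 := by omega
    simp [h3, hN i h1]

/-- The restriction `w|_m` of a vertex to level `m`. -/
def trunc (v : Vertex q) (m : ℤ) : Vertex q where
  level := m
  lab := fun i => if m < i then 0 else v.lab i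
  zero_gt := by intro i hi; simp [hi]
  bdd := by
    obtain ⟨N, hN⟩ := v.bdd
    refine ⟨N, fun i hi => ?_⟩
    by_cases h : m < i
    · simp [h]
    · simp [h, hN i hi]

/-- `w` is a descendant of `u` (in the rooted subtree `T_u`). -/
def Descendant (u w : Vertex q) : Prop := u.level ≤ w.level ∧ trunc w u.level = u

end Vertex

/-- The all-zero vertex `ṽ_n` at level `n`. -/
def zeroVtx (q : ℕ) [NeZero q] (n : ℤ) : Vertex q where
  level := n
  lab := fun _ => 0
  zero_gt := by intro i _; simp
  bdd := ⟨0, by intro i _; simp⟩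

/-- The map shifting all labels by `k` (a translation towards the end `ω` when `k > 0`). -/
def shiftMap {q : ℕ} (k : ℤ) (v : Vertex q) : Vertex q where
  level := v.level + k
  lab := fun i => v.lab (i - k)
  zero_gt := fun i hi => v.zero_gt (i - k) (by omega)
  bdd := by
    obtain ⟨N, hN⟩ := v.bdd
    exact ⟨N + k, fun i hi => hN (i - k) (by omega)⟩

/-- The translation `x̃₀ᵏ` of `T_{q+1}` as a permutation of the vertices. -/
def shiftPerm (q : ℕ) (k : ℤ) : Equiv.Perm (Vertex q) where
  toFun := shiftMap k
  invFun := shiftMap (-k)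
  left_inv := by
    intro v
    refine Vertex.ext ?_ ?_
    · show v.level + k + -k = v.level
      omega
    · funext i
      show v.lab (i - -k - k) = v.lab i
      congr 1
      omega
  right_inv := by
    intro v
    refine Vertex.ext ?_ ?_
    · show v.level + -k + k = v.level
      omega
    · funext i
      show v.lab (i - k - -k) = v.lab i
      congr 1
      omega

/-- The group `Isom(T_{q+1})_ω` of tree automorphisms fixing the distinguished end `ω`,
realised as the subgroup of permutations of the vertex set commuting with `parent`. -/
def IsomOmega (q : ℕ) [NeZero q] : Subgroup (Equiv.Perm (Vertex q)) where
  carrier := {x | ∀ v : Vertex q, x (Vertex.parent v) = Vertex.parent (x v)}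
  one_mem' := fun _ => rfl
  mul_mem' := by
    intro a b ha hb v
    show (a * b) (Vertex.parent v) = Vertex.parent ((a * b) v)
    rw [Equiv.Perm.mul_apply, Equiv.Perm.mul_apply, hb, ha]
  inv_mem' := by
    intro a ha v
    show a⁻¹ (Vertex.parent v) = Vertex.parent (a⁻¹ v)
    have h := ha (a⁻¹ v)
    rw [← Equiv.Perm.mul_apply, mul_inv_cancel, Equiv.Perm.one_apply] at h
    rw [← h]
    rw [← Equiv.Perm.mul_apply, inv_mul_cancel, Equiv.Perm.one_apply]

/-- The level shift `n(x)` of an automorphism (evaluated at the zero vertex; for members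
of `IsomOmega q` the shift is the same at every vertex). -/
def lshift {q : ℕ} [NeZero q] (x : Equiv.Perm (Vertex q)) : ℤ := (x (zeroVtx q 0)).level

/-- An automorphism is elliptic if it fixes a vertex. -/
def Elliptic {q : ℕ} (x : Equiv.Perm (Vertex q)) : Prop := ∃ v : Vertex q, x v = v

/-- Topology of pointwise convergence on `X → X` for `X` discrete. -/
def funTop (X : Type*) : TopologicalSpace (X → X) :=
  @Pi.topologicalSpace X (fun _ => X) (fun _ => ⊥)

/-- The permutation topology on `Equiv.Perm X`: pointwise stabilisers of finite sets of
points form a neighbourhood basis of the identity. -/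
def permTop (X : Type*) : TopologicalSpace (Equiv.Perm X) :=
  @TopologicalSpace.induced (Equiv.Perm X) ((X → X) × (X → X))
    (fun g => ((g : X → X), ((g⁻¹ : Equiv.Perm X) : X → X)))
    (@instTopologicalSpaceProd _ _ (funTop X) (funTop X))

instance (q : ℕ) : TopologicalSpace (Equiv.Perm (Vertex q)) := permTop _

instance (q : ℕ) : TopologicalSpace (Equiv.Perm (List (Fin q))) := permTop _

/-- A scale group: a closed subgroup of `Isom(T_{q+1})_ω` acting transitively on vertices. -/
def IsScaleGroup {q : ℕ} [NeZero q] (P : Subgroup (Equiv.Perm (Vertex q))) : Prop :=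
  P ≤ IsomOmega q ∧ IsClosed (P : Set (Equiv.Perm (Vertex q))) ∧
    ∀ v w : Vertex q, ∃ x ∈ P, x v = w

/-- The stabiliser of the vertex `v` in `P`, as a subgroup of the ambient permutation group. -/
def stabIn {q : ℕ} (P : Subgroup (Equiv.Perm (Vertex q))) (v : Vertex q) :
    Subgroup (Equiv.Perm (Vertex q)) where
  carrier := {g | g ∈ P ∧ g v = v}
  one_mem' := ⟨P.one_mem, rfl⟩
  mul_mem' := by
    intro a b ha hb
    exact ⟨P.mul_mem ha.1 hb.1, by rw [Equiv.Perm.mul_apply, hb.2, ha.2]⟩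
  inv_mem' := by
    intro a ha
    refine ⟨P.inv_mem ha.1, ?_⟩
    rw [Equiv.Perm.inv_eq_iff_eq]
    exact ha.2.symm

/-- The conjugate subgroup `xVx⁻¹`. -/
def conjSub {G : Type*} [Group G] (x : G) (V : Subgroup G) : Subgroup G :=
  V.map (MulAut.conj x).toMonoidHom

/-- The vertex `ξ|_m` on the ray towards the end represented by `ξ`. -/
def ray (q : ℕ) [NeZero q] (ξ : ℤ → Fin q) (N : ℤ) (hξ : ∀ i : ℤ, i < N → (ξ i : ℕ) = 0)
    (m : ℤ) : Vertex q where
  level := m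
  lab := fun i => if m < i then 0 else ξ i
  zero_gt := by intro i hi; simp [hi]
  bdd := by
    refine ⟨N, fun i hi => ?_⟩
    by_cases h : m < i
    · simp [h]
    · simp [h, hξ i hi]

/-- The contraction group of `x` in `P`. -/
def conSet {q : ℕ} (P : Subgroup (Equiv.Perm (Vertex q))) (x : Equiv.Perm (Vertex q)) :
    Set (Equiv.Perm (Vertex q)) :=
  {g | g ∈ P ∧ ∀ v : Vertex q, ∃ N : ℕ, ∀ n : ℕ, N ≤ n → (x ^ n * g * (x ^ n)⁻¹) v = v}


/-- `c` is a `P`-labelling of `T_{q+1}` with distinguished bi-infinite path `vp`: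
each `c v` is a bijection from the directed edges out of `v` (encoded as the
neighbours of `v`) to `{0, …, q}`; the edge towards the parent is labelled `q`;
along the path `vp` the downward edges are labelled `0`; and `P` contains, for
all `u₁, u₂`, an element carrying `u₁` to `u₂` and preserving the labels on the
rooted subtree of descendants of `u₁`. -/
def IsPLabelling {q : ℕ} [NeZero q] (P : Subgroup (Equiv.Perm (Vertex q)))
    (c : Vertex q → Vertex q → Fin (q + 1)) (vp : ℤ → Vertex q) : Prop :=
  (∀ v : Vertex q, ∀ j : Fin (q + 1),
      ∃! w : Vertex q, (Vertex.parent w = v ∨ w = Vertex.parent v) ∧ c v w = j) ∧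
  (∀ v : Vertex q, (c v (Vertex.parent v) : ℕ) = q) ∧
  (∀ n : ℤ, Vertex.parent (vp (n + 1)) = vp n) ∧
  (∀ n : ℤ, (c (vp n) (vp (n + 1)) : ℕ) = 0) ∧
  (∀ u₁ u₂ : Vertex q, ∃ x, x ∈ P ∧ x u₁ = u₂ ∧
    ∀ w w' : Vertex q, Vertex.Descendant u₁ w → Vertex.Descendant u₁ w' →
      (Vertex.parent w = w' ∨ Vertex.parent w' = w) → c (x w) (x w') = c w w')

open Classical in
/-- The standard labelling of `T_{q+1}`: the edge from `v` to its child `vj` is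
labelled `j` and the edge towards the parent is labelled `q`. -/
noncomputable def stdLabel (q : ℕ) [NeZero q] : Vertex q → Vertex q → Fin (q + 1) :=
  fun v w =>
    if Vertex.parent w = v then Fin.castLE (Nat.le_succ q) (w.lab (v.level + 1))
    else Fin.last q

/-- Convert an edge label in `{0,…,q}` known to be `< q` into a letter in `{0,…,q-1}`. -/
def toFinQ {q : ℕ} [NeZero q] (j : Fin (q + 1)) : Fin q :=
  if h : (j : ℕ) < q then ⟨j, h⟩ else ⟨0, Nat.pos_of_ne_zero (NeZero.ne q)⟩

/-- The string of labels read along the downward path of length `d` ending at `w`. -/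
def labelString {q : ℕ} [NeZero q] (c : Vertex q → Vertex q → Fin (q + 1)) :
    Vertex q → ℕ → List (Fin q)
  | _, 0 => []
  | w, (d + 1) => labelString c (Vertex.parent w) d ++ [toFinQ (c (Vertex.parent w) w)]

/-- The isomorphism `φ^c_v : T_v → T_{q,q}` given by a labelling `c`: a descendant `w`
of `v` is sent to the string of labels along the path from `v` down to `w`. -/
def phiStr {q : ℕ} [NeZero q] (c : Vertex q → Vertex q → Fin (q + 1)) (v w : Vertex q) :
    List (Fin q) :=
  labelString c w ((w.level - v.level).toNat)

/-- The set `P|_v = {φ^c_{x(v)} ∘ x ∘ (φ^c_v)⁻¹ : x ∈ P}` of sections of elements of `P`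
at the vertex `v`, with respect to the labelling `c`. -/
def sectSet {q : ℕ} [NeZero q] (P : Subgroup (Equiv.Perm (Vertex q)))
    (c : Vertex q → Vertex q → Fin (q + 1)) (v : Vertex q) :
    Set (Equiv.Perm (List (Fin q))) :=
  {g | ∃ x, x ∈ P ∧ ∀ w : Vertex q, Vertex.Descendant v w →
        g (phiStr c v w) = phiStr c (x v) (x w)}

/-- The standard isomorphism `φ_v : T_v → T_{q,q}`: a descendant `w` of `v` of level `m`
is sent to the string `(w_{n+1}, …, w_m)` where `n` is the level of `v`. -/
def stdStr {q : ℕ} (v w : Vertex q) : List (Fin q) :=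
  (List.range (w.level - v.level).toNat).map fun k => w.lab (v.level + 1 + k)

/-- The set `{φ_{x(v)} ∘ x ∘ φ_v⁻¹ : x ∈ P}` with respect to the standard isomorphisms. -/
def stdSect {q : ℕ} [NeZero q] (P : Subgroup (Equiv.Perm (Vertex q))) (v : Vertex q) :
    Set (Equiv.Perm (List (Fin q))) :=
  {g | ∃ x, x ∈ P ∧ ∀ w : Vertex q, Vertex.Descendant v w →
        g (stdStr v w) = stdStr (x v) (x w)}

/-- `Isom(T_{q,q})`: the group of permutations of the set of finite strings over
`{0,…,q-1}` preserving length and the prefix relation. -/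
def RIsom (q : ℕ) : Subgroup (Equiv.Perm (List (Fin q))) where
  carrier := {g | (∀ l : List (Fin q), (g l).length = l.length) ∧
    ∀ l₁ l₂ : List (Fin q), l₁ <+: l₂ → g l₁ <+: g l₂}
  one_mem' := ⟨fun _ => rfl, fun _ _ h => h⟩
  mul_mem' := by
    intro a b ha hb
    constructor
    · intro l
      rw [Equiv.Perm.mul_apply, ha.1, hb.1]
    · intro l₁ l₂ h
      rw [Equiv.Perm.mul_apply, Equiv.Perm.mul_apply]
      exact ha.2 _ _ (hb.2 _ _ h)
  inv_mem' := by
    intro a ha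
    have hlen : ∀ l : List (Fin q), (a⁻¹ l).length = l.length := by
      intro l
      have h := ha.1 (a⁻¹ l)
      rw [← Equiv.Perm.mul_apply, mul_inv_cancel, Equiv.Perm.one_apply] at h
      exact h.symm
    refine ⟨hlen, ?_⟩
    intro l₁ l₂ h
    have htake : List.take (a⁻¹ l₁).length (a⁻¹ l₂) <+: a⁻¹ l₂ := List.take_prefix _ _
    have h2 : a (List.take (a⁻¹ l₁).length (a⁻¹ l₂)) <+: a (a⁻¹ l₂) := ha.2 _ _ htake
    rw [← Equiv.Perm.mul_apply, mul_inv_cancel, Equiv.Perm.one_apply] at h2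
    have hle : l₁.length ≤ l₂.length := h.length_le
    have hlen3 : (a (List.take (a⁻¹ l₁).length (a⁻¹ l₂))).length = l₁.length := by
      rw [ha.1, List.length_take, hlen, hlen]
      omega
    have hpre : a (List.take (a⁻¹ l₁).length (a⁻¹ l₂)) <+: l₁ :=
      List.prefix_of_prefix_length_le h2 h (le_of_eq hlen3)
    have heq : a (List.take (a⁻¹ l₁).length (a⁻¹ l₂)) = l₁ := hpre.eq_of_length hlen3
    have heq2 : List.take (a⁻¹ l₁).length (a⁻¹ l₂) = a⁻¹ l₁ := by
      apply a.injective
      rw [heq]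
      rw [← Equiv.Perm.mul_apply, mul_inv_cancel, Equiv.Perm.one_apply]
    rw [← heq2]
    exact List.take_prefix _ _

/-- A subgroup of `Isom(T_{q,q})` is self-replicating if it is self-similar, transitive
on level 1, and all the section homomorphisms `g ↦ g|_w` are surjective. -/
def SelfReplicating {q : ℕ} (G : Subgroup (Equiv.Perm (List (Fin q)))) : Prop :=
  (∀ w : List (Fin q), ∀ g, g ∈ G → g w = w →
      ∃ g', g' ∈ G ∧ ∀ v : List (Fin q), g (w ++ v) = w ++ g' v) ∧
  (∀ j j' : Fin q, ∃ g ∈ G, g [j] = [j']) ∧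
  (∀ w : List (Fin q), ∀ g', g' ∈ G →
      ∃ g, g ∈ G ∧ g w = w ∧ ∀ v : List (Fin q), g (w ++ v) = w ++ g' v)

/-- The stabiliser of the string `w` in `G ≤ Isom(T_{q,q})`, as a subgroup of `G`. -/
def rstab {q : ℕ} (G : Subgroup (Equiv.Perm (List (Fin q)))) (w : List (Fin q)) :
    Subgroup G where
  carrier := {g | (g : Equiv.Perm (List (Fin q))) w = w}
  one_mem' := rfl
  mul_mem' := by
    intro a b ha hb
    show ((a * b : G) : Equiv.Perm (List (Fin q))) w = w
    rw [Subgroup.coe_mul, Equiv.Perm.mul_apply]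
    rw [show (b : Equiv.Perm (List (Fin q))) w = w from hb,
      show (a : Equiv.Perm (List (Fin q))) w = w from ha]
  inv_mem' := by
    intro a ha
    show ((a⁻¹ : G) : Equiv.Perm (List (Fin q))) w = w
    rw [Subgroup.coe_inv, Equiv.Perm.inv_eq_iff_eq]
    exact (show (a : Equiv.Perm (List (Fin q))) w = w from ha).symm

/-!
Choose `x ∈ P` with `x (zeroVtx q 0) = zeroVtx q 1`. It shifts levels by one, and its orbit of
`zeroVtx q 0` is a bi-infinite path, the spine. Every vertex is an `x`-translate of a vertex
hanging off `spine 0`; the subtree hanging off `spine 0` at a child `c ≠ spine 1` is the image of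
the subtree below `spine 1` under a chosen element of `P` sending `spine 1` to `c`, and a vertex
of level `d` below `spine 1` is at distance less than `d` from the spine. This lets one define the
labels by recursion on the distance to the spine: standard on the children of `spine 0`,
`x`-invariant, and transported by the chosen elements. These elements and the powers of `x`
preserve labels by construction, so by induction on the distance to the spine every vertex `u`
is the image of `spine u.level` under a label-preserving element of `P`. Composing such elements
gives condition (3); since label-preserving elements permute the children of a vertex, the labels
of the children of any vertex are, like those of `spine 0`, a bijection onto `{0, …, q - 1}`.
-/

namespace Vertex

variable {q : ℕ}

@[simp] lemma level_child (w : Vertex q) (j : Fin q) : (w.child j).level = w.level + 1 := rfl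

lemma lab_child (w : Vertex q) (j : Fin q) : (w.child j).lab (w.level + 1) = j := if_pos rfl

lemma child_injective (w : Vertex q) : Function.Injective w.child := fun j j' h => by
  rw [← lab_child w j, h, lab_child]

variable [NeZero q]

@[simp] lemma level_parent (w : Vertex q) : w.parent.level = w.level - 1 := rfl

@[simp] lemma level_trunc (w : Vertex q) (m : ℤ) : (w.trunc m).level = m := rfl

lemma parent_eq_trunc (w : Vertex q) : w.parent = w.trunc (w.level - 1) := rfl

lemma trunc_self (w : Vertex q) : w.trunc w.level = w := by
  refine Vertex.ext rfl (funext fun i => ?_)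
  show (if w.level < i then 0 else w.lab i) = w.lab i
  split_ifs with h
  · exact (Fin.val_eq_zero_iff.mp (w.zero_gt i h)).symm
  · rfl

lemma trunc_trunc (w : Vertex q) {m m' : ℤ} (h : m' ≤ m) :
    (w.trunc m).trunc m' = w.trunc m' := by
  refine Vertex.ext rfl (funext fun i => ?_)
  show (if m' < i then 0 else if m < i then 0 else w.lab i) = if m' < i then 0 else w.lab i
  split_ifs <;> first | rfl | omega

lemma parent_iterate (w : Vertex q) (k : ℕ) : parent^[k] w = w.trunc (w.level - k) := by
  induction k generalizing w with
  | zero => simp [trunc_self]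
  | succ k ih =>
    rw [Function.iterate_succ_apply, ih, parent_eq_trunc, level_trunc,
      trunc_trunc _ (by omega)]
    congr 1
    push_cast
    ring

lemma exists_trunc_eq_zeroVtx (w : Vertex q) : ∃ N : ℤ, ∀ m < N, w.trunc m = zeroVtx q m := by
  obtain ⟨N, hN⟩ := w.bdd
  refine ⟨N, fun m hm => Vertex.ext rfl (funext fun i => ?_)⟩
  show (if m < i then 0 else w.lab i) = 0
  split_ifs
  · rfl
  · exact Fin.val_eq_zero_iff.mp (hN i (by omega))

lemma parent_child (w : Vertex q) (j : Fin q) : (w.child j).parent = w := by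
  refine Vertex.ext (by simp) (funext fun i => ?_)
  show (if w.level + 1 - 1 < i then 0 else if i = w.level + 1 then j else w.lab i) = w.lab i
  split_ifs with h₁ h₂
  · exact (Fin.val_eq_zero_iff.mp (w.zero_gt i (by omega))).symm
  · omega
  · rfl

lemma eq_child_of_parent_eq {u w : Vertex q} (h : w.parent = u) :
    w = u.child (w.lab (u.level + 1)) := by
  subst h
  refine Vertex.ext (by simp) (funext fun i => ?_)
  show w.lab i = if i = w.level - 1 + 1 then w.lab (w.level - 1 + 1)
    else if w.level - 1 < i then 0 else w.lab i
  split_ifs with h₁ h₂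
  · rw [h₁]
  · exact Fin.val_eq_zero_iff.mp (w.zero_gt i (by omega))
  · rfl

lemma descendant_child (w : Vertex q) (j : Fin q) : Descendant w (w.child j) := by
  refine ⟨by simp, ?_⟩
  have := parent_child w j
  rwa [parent_eq_trunc, level_child, add_sub_cancel_right] at this

lemma parent_parent_ne (w : Vertex q) : w.parent.parent ≠ w := fun h => by
  have := congrArg Vertex.level h
  simp only [level_parent] at this
  omega

lemma Descendant.trans {u v w : Vertex q} (huv : Descendant u v) (hvw : Descendant v w) :
    Descendant u w :=
  ⟨huv.1.trans hvw.1, by rw [← trunc_trunc w huv.1, hvw.2, huv.2]⟩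

end Vertex

@[simp] lemma level_zeroVtx (q : ℕ) [NeZero q] (n : ℤ) : (zeroVtx q n).level = n := rfl

lemma zeroVtx_trunc {q : ℕ} [NeZero q] (n m : ℤ) : (zeroVtx q n).trunc m = zeroVtx q m :=
  Vertex.ext rfl (funext fun _ => ite_self _)

namespace IsomOmega

open Vertex

variable {q : ℕ} [NeZero q] {g : Equiv.Perm (Vertex q)}

lemma apply_parent_iterate (hg : g ∈ IsomOmega q) (w : Vertex q) (k : ℕ) :
    g (parent^[k] w) = parent^[k] (g w) := by
  induction k generalizing w with
  | zero => rfl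
  | succ k ih => rw [Function.iterate_succ_apply', Function.iterate_succ_apply', hg, ih]

lemma apply_trunc' (hg : g ∈ IsomOmega q) {w : Vertex q} {m : ℤ} (hm : m ≤ w.level) :
    g (w.trunc m) = (g w).trunc ((g w).level - w.level + m) := by
  have h := apply_parent_iterate hg w (w.level - m).toNat
  rw [parent_iterate, parent_iterate, show w.level - ((w.level - m).toNat : ℤ) = m by omega] at h
  rw [h]
  congr 1
  omega

lemma level_apply (hg : g ∈ IsomOmega q) (w : Vertex q) : (g w).level = w.level + lshift g := by
  obtain ⟨N, hN⟩ := w.exists_trunc_eq_zeroVtx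
  set m := min (N - 1) (min w.level 0)
  have hw := congrArg Vertex.level (apply_trunc' hg (w := w) (m := m) (by omega))
  -- `w` and `zeroVtx q 0` share the ancestor `zeroVtx q m`
  have h₀ := congrArg Vertex.level
    (apply_trunc' hg (w := zeroVtx q 0) (m := m) (by simp; omega))
  rw [hN m (by omega)] at hw
  rw [zeroVtx_trunc] at h₀
  simp only [level_trunc, level_zeroVtx] at hw h₀
  unfold lshift
  omega

lemma level_inv_apply (hg : g ∈ IsomOmega q) (w : Vertex q) :
    (g⁻¹ w).level = w.level - lshift g := by
  have h := level_apply hg (g⁻¹ w)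
  rw [← Equiv.Perm.mul_apply, mul_inv_cancel, Equiv.Perm.one_apply] at h
  omega

lemma level_zpow_apply (hg : g ∈ IsomOmega q) (k : ℤ) (w : Vertex q) :
    ((g ^ k) w).level = w.level + k * lshift g := by
  induction k using Int.induction_on generalizing w with
  | zero => simp
  | succ k ih => rw [zpow_add_one, Equiv.Perm.mul_apply, ih, level_apply hg]; ring
  | pred k ih => rw [zpow_sub_one, Equiv.Perm.mul_apply, ih, level_inv_apply hg]; ring

lemma apply_trunc (hg : g ∈ IsomOmega q) {w : Vertex q} {m : ℤ} (hm : m ≤ w.level) :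
    g (w.trunc m) = (g w).trunc (m + lshift g) := by
  rw [apply_trunc' hg hm, level_apply hg]
  congr 1
  ring

lemma lshift_eq_zero (hg : g ∈ IsomOmega q) {a b : Vertex q} (h : g a = b)
    (hl : a.level = b.level) : lshift g = 0 := by
  have := level_apply hg a
  rw [h] at this
  omega

lemma descendant_apply (hg : g ∈ IsomOmega q) {v w : Vertex q} (h : Descendant v w) :
    Descendant (g v) (g w) := by
  refine ⟨by rw [level_apply hg, level_apply hg]; linarith [h.1], ?_⟩
  rw [level_apply hg, ← apply_trunc hg h.1, h.2]

lemma level_lt_level_apply (hg : g ∈ IsomOmega q) {v w : Vertex q} :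
    (g v).level < (g w).level ↔ v.level < w.level := by
  rw [level_apply hg, level_apply hg, add_lt_add_iff_right]

lemma exists_perm_child (hg : g ∈ IsomOmega q) (u : Vertex q) :
    ∃ σ : Equiv.Perm (Fin q), ∀ j, g (u.child j) = (g u).child (σ j) := by
  set f : Fin q → Fin q := fun j => (g (u.child j)).lab ((g u).level + 1)
  have hf : ∀ j, g (u.child j) = (g u).child (f j) := fun j =>
    eq_child_of_parent_eq (by rw [← hg, parent_child])
  have hinj : Function.Injective f := fun j j' h => by
    apply child_injective u
    apply g.injective
    rw [hf, hf, h]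
  exact ⟨Equiv.ofBijective f (Finite.injective_iff_bijective.mp hinj), hf⟩

end IsomOmega

structure TransitiveFrame (q : ℕ) [NeZero q] where
  P : Subgroup (Equiv.Perm (Vertex q))
  le_isomOmega : P ≤ IsomOmega q
  exists_apply_eq : ∀ v w : Vertex q, ∃ g ∈ P, g v = w

namespace TransitiveFrame

open Vertex

variable {q : ℕ} [NeZero q] (F : TransitiveFrame q)

noncomputable def transfer (v w : Vertex q) : Equiv.Perm (Vertex q) :=
  Classical.choose (F.exists_apply_eq v w)

lemma transfer_mem (v w : Vertex q) : F.transfer v w ∈ F.P :=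
  (Classical.choose_spec (F.exists_apply_eq v w)).1

lemma transfer_apply (v w : Vertex q) : F.transfer v w v = w :=
  (Classical.choose_spec (F.exists_apply_eq v w)).2

lemma transfer_mem_isomOmega (v w : Vertex q) : F.transfer v w ∈ IsomOmega q :=
  F.le_isomOmega (F.transfer_mem v w)

lemma lshift_transfer {v w : Vertex q} (h : v.level = w.level) : lshift (F.transfer v w) = 0 :=
  IsomOmega.lshift_eq_zero (F.transfer_mem_isomOmega v w) (F.transfer_apply v w) h

noncomputable def translation : Equiv.Perm (Vertex q) := F.transfer (zeroVtx q 0) (zeroVtx q 1)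

lemma translation_mem_isomOmega : F.translation ∈ IsomOmega q := F.transfer_mem_isomOmega _ _

lemma translation_zeroVtx : F.translation (zeroVtx q 0) = zeroVtx q 1 := F.transfer_apply _ _

lemma translation_zpow_mem (k : ℤ) : F.translation ^ k ∈ F.P :=
  F.P.zpow_mem (F.transfer_mem _ _) k

lemma translation_zpow_mem_isomOmega (k : ℤ) : F.translation ^ k ∈ IsomOmega q :=
  F.le_isomOmega (F.translation_zpow_mem k)

lemma level_translation_zpow_apply (k : ℤ) (w : Vertex q) :
    ((F.translation ^ k) w).level = w.level + k := by
  rw [IsomOmega.level_zpow_apply F.translation_mem_isomOmega, lshift, translation_zeroVtx]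
  simp

lemma lshift_translation_zpow (k : ℤ) : lshift (F.translation ^ k) = k := by
  rw [lshift, level_translation_zpow_apply, level_zeroVtx, zero_add]

lemma translation_zpow_trunc (k : ℤ) {w : Vertex q} {m : ℤ} (hm : m ≤ w.level) :
    (F.translation ^ k) (w.trunc m) = ((F.translation ^ k) w).trunc (m + k) := by
  rw [IsomOmega.apply_trunc (F.translation_zpow_mem_isomOmega k) hm, lshift_translation_zpow]

noncomputable def spine (n : ℤ) : Vertex q := (F.translation ^ n) (zeroVtx q 0)

lemma translation_zpow_spine (k n : ℤ) : (F.translation ^ k) (F.spine n) = F.spine (n + k) := by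
  rw [spine, spine, ← Equiv.Perm.mul_apply, ← zpow_add, add_comm]

@[simp] lemma level_spine (n : ℤ) : (F.spine n).level = n := by
  simp [spine, level_translation_zpow_apply]

lemma spine_zero : F.spine 0 = zeroVtx q 0 := rfl

lemma spine_one : F.spine 1 = zeroVtx q 1 := by
  rw [spine, zpow_one, translation_zeroVtx]

lemma spine_parent (n : ℤ) : (F.spine n).parent = F.spine (n - 1) := by
  have h : (zeroVtx q 0).parent = F.spine (-1) := by
    rw [spine, zpow_neg_one, eq_comm, Equiv.Perm.inv_eq_iff_eq, F.translation_mem_isomOmega,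
      translation_zeroVtx, parent_eq_trunc, zeroVtx_trunc]
    rfl
  rw [spine, ← F.translation_zpow_mem_isomOmega, h, translation_zpow_spine]
  ring_nf

lemma spine_trunc {m n : ℤ} (h : m ≤ n) : (F.spine n).trunc m = F.spine m := by
  obtain ⟨k, rfl⟩ : ∃ k : ℕ, m = n - k := ⟨(n - m).toNat, by omega⟩
  induction k with
  | zero => simpa using trunc_self (F.spine n)
  | succ k ih =>
    rw [← trunc_trunc _ (show n - ((k + 1 : ℕ) : ℤ) ≤ n - k by omega), ih (by omega),
      show n - ((k + 1 : ℕ) : ℤ) = (F.spine (n - k)).level - 1 by simp; ring,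
      ← parent_eq_trunc, spine_parent, level_spine]

lemma spine_eq_zeroVtx {m : ℤ} (hm : m ≤ 0) : F.spine m = zeroVtx q m := by
  rw [← F.spine_trunc hm, spine_zero, zeroVtx_trunc]

lemma exists_trunc_eq_spine (w : Vertex q) :
    ∃ k : ℕ, w.trunc (w.level - k) = F.spine (w.level - k) := by
  obtain ⟨N, hN⟩ := w.exists_trunc_eq_zeroVtx
  refine ⟨(w.level - min (N - 1) (min w.level 0)).toNat, ?_⟩
  rw [show w.level - ((w.level - min (N - 1) (min w.level 0)).toNat : ℤ)
    = min (N - 1) (min w.level 0) by omega, hN _ (by omega), F.spine_eq_zeroVtx (by omega)]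

section Depth

open Classical

/-- `w` leaves the spine at level `w.level - F.depth w`. -/
noncomputable def depth (w : Vertex q) : ℕ := Nat.find (F.exists_trunc_eq_spine w)

lemma trunc_depth (w : Vertex q) :
    w.trunc (w.level - F.depth w) = F.spine (w.level - F.depth w) :=
  Nat.find_spec (F.exists_trunc_eq_spine w)

lemma trunc_ne_spine_of_lt_depth {w : Vertex q} {k : ℕ} (hk : k < F.depth w) :
    w.trunc (w.level - k) ≠ F.spine (w.level - k) :=
  Nat.find_min (F.exists_trunc_eq_spine w) hk

lemma depth_le_of_trunc_eq_spine {w : Vertex q} {m : ℤ} (hm : m ≤ w.level)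
    (h : w.trunc m = F.spine m) : (F.depth w : ℤ) ≤ w.level - m := by
  have := Nat.find_min' (F.exists_trunc_eq_spine w) (m := (w.level - m).toNat)
    (by rwa [show w.level - ((w.level - m).toNat : ℤ) = m by omega])
  change F.depth w ≤ _ at this
  omega

lemma depth_spine (n : ℤ) : F.depth (F.spine n) = 0 :=
  (Nat.find_eq_zero _).mpr (by simpa using trunc_self (F.spine n))

lemma depth_eq_level {w : Vertex q} (hw : 1 ≤ w.level) (h₀ : w.trunc 0 = F.spine 0)
    (h₁ : w.trunc 1 ≠ F.spine 1) : (F.depth w : ℤ) = w.level := by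
  have : F.depth w = w.level.toNat := by
    refine (Nat.find_eq_iff _).mpr ⟨by rwa [show w.level - (w.level.toNat : ℤ) = 0 by omega],
      fun k hk h => h₁ ?_⟩
    rw [← trunc_trunc w (show 1 ≤ w.level - k by omega), h, F.spine_trunc (by omega)]
  omega

lemma depth_translation_zpow_apply (k : ℤ) (w : Vertex q) :
    F.depth ((F.translation ^ k) w) = F.depth w := by
  refine Nat.find_congr' fun {j} => ?_
  rw [level_translation_zpow_apply, show w.level + k - j = w.level - j + k by ring,
    ← translation_zpow_trunc _ _ (by omega), ← translation_zpow_spine,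
    (F.translation ^ k).injective.eq_iff]

end Depth

/-- The translate of `w` hanging off the spine at `spine 0`. -/
noncomputable def base (w : Vertex q) : Vertex q :=
  (F.translation ^ ((F.depth w : ℤ) - w.level)) w

@[simp] lemma level_base (w : Vertex q) : (F.base w).level = F.depth w := by
  simp [base, level_translation_zpow_apply]

@[simp] lemma depth_base (w : Vertex q) : F.depth (F.base w) = F.depth w :=
  F.depth_translation_zpow_apply _ w

lemma base_translation_zpow_apply (k : ℤ) (w : Vertex q) :
    F.base ((F.translation ^ k) w) = F.base w := by
  rw [base, base, depth_translation_zpow_apply, level_translation_zpow_apply,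
    ← Equiv.Perm.mul_apply, ← zpow_add, show (F.depth w : ℤ) - (w.level + k) + k
    = F.depth w - w.level by ring]

lemma base_eq_self {w : Vertex q} (h : (F.depth w : ℤ) = w.level) : F.base w = w := by
  rw [base, h, sub_self, zpow_zero, Equiv.Perm.one_apply]

lemma base_trunc_zero (w : Vertex q) : (F.base w).trunc 0 = F.spine 0 := by
  simpa using F.trunc_depth (F.base w)

lemma base_trunc_one_ne {w : Vertex q} (h : 1 ≤ F.depth w) :
    (F.base w).trunc 1 ≠ F.spine 1 := by
  have := F.trunc_ne_spine_of_lt_depth (w := F.base w) (k := F.depth w - 1) (by simp; omega)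
  rwa [level_base, show (F.depth w : ℤ) - ((F.depth w - 1 : ℕ) : ℤ) = 1 by omega] at this

/-- `F.base w` pulled back into the subtree below `spine 1`. -/
noncomputable def reduce (w : Vertex q) : Vertex q :=
  (F.transfer (F.spine 1) ((F.base w).trunc 1))⁻¹ (F.base w)

lemma transfer_reduce (w : Vertex q) :
    F.transfer (F.spine 1) ((F.base w).trunc 1) (F.reduce w) = F.base w :=
  Equiv.apply_symm_apply _ _

lemma reduce_translation_zpow_apply (k : ℤ) (w : Vertex q) :
    F.reduce ((F.translation ^ k) w) = F.reduce w := by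
  simp only [reduce, base_translation_zpow_apply]

@[simp] lemma level_reduce (w : Vertex q) : (F.reduce w).level = F.depth w := by
  rw [reduce, IsomOmega.level_inv_apply (F.transfer_mem_isomOmega _ _),
    F.lshift_transfer (by simp), level_base, sub_zero]

lemma descendant_reduce {w : Vertex q} (h : 1 ≤ F.depth w) :
    Descendant (F.spine 1) (F.reduce w) := by
  refine ⟨by simp; omega, (F.transfer (F.spine 1) ((F.base w).trunc 1)).injective ?_⟩
  rw [level_spine, IsomOmega.apply_trunc (F.transfer_mem_isomOmega _ _) (by simp; omega),
    F.lshift_transfer (by simp), add_zero, transfer_reduce, transfer_apply]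

lemma depth_reduce_lt {w : Vertex q} (h : 1 ≤ F.depth w) : F.depth (F.reduce w) < F.depth w := by
  have hr := F.descendant_reduce h
  have := F.depth_le_of_trunc_eq_spine (w := F.reduce w) (m := 1) (by simpa using hr.1)
    (by simpa using hr.2)
  simp only [level_reduce] at this
  omega

/-- The label of the edge from `w.parent` to `w`: standard on the children of `spine 0`,
translation-invariant, and transported from the subtree below `spine 1` to the other subtrees
hanging off `spine 0`. -/
noncomputable def letter (w : Vertex q) : Fin q :=
  if F.depth w ≤ 1 then (F.base w).lab 1 else letter (F.reduce w)
termination_by F.depth w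
decreasing_by exact F.depth_reduce_lt (by omega)

lemma letter_of_depth_le_one {w : Vertex q} (h : F.depth w ≤ 1) :
    F.letter w = (F.base w).lab 1 := by
  rw [letter, if_pos h]

lemma letter_of_one_lt_depth {w : Vertex q} (h : 1 < F.depth w) :
    F.letter w = F.letter (F.reduce w) := by
  rw [letter, if_neg (by omega)]

lemma letter_translation_zpow_apply (k : ℤ) (w : Vertex q) :
    F.letter ((F.translation ^ k) w) = F.letter w := by
  rw [letter.eq_def F ((F.translation ^ k) w), letter.eq_def F w, depth_translation_zpow_apply,
    base_translation_zpow_apply, reduce_translation_zpow_apply]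

lemma letter_spine (n : ℤ) : F.letter (F.spine n) = 0 := by
  rw [F.letter_of_depth_le_one (by simp [depth_spine]), base, depth_spine, level_spine,
    translation_zpow_spine]
  simp [spine_zero, zeroVtx]

lemma letter_spine_zero_child (j : Fin q) : F.letter ((F.spine 0).child j) = j := by
  have hlab : ((F.spine 0).child j).lab 1 = j := lab_child (F.spine 0) j
  by_cases hw : (F.spine 0).child j = F.spine 1
  · rw [hw, letter_spine, ← hlab, hw, spine_one]
    rfl
  have hlevel : ((F.spine 0).child j).level = 1 := by simp
  have h₀ : ((F.spine 0).child j).trunc 0 = F.spine 0 := by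
    have := parent_child (F.spine 0) j
    rwa [parent_eq_trunc, hlevel, sub_self] at this
  have hdepth := F.depth_eq_level (w := (F.spine 0).child j) (by omega) h₀
    (by rwa [← hlevel, trunc_self])
  rw [F.letter_of_depth_le_one (by omega), F.base_eq_self hdepth, hlab]

def PreservesLetters (g : Equiv.Perm (Vertex q)) (v : Vertex q) : Prop :=
  ∀ z, Descendant v z → v.level < z.level → F.letter (g z) = F.letter z

def Carries (v u : Vertex q) : Prop :=
  ∃ g ∈ F.P, g v = u ∧ F.PreservesLetters g v

variable {F}

lemma PreservesLetters.descendant {g : Equiv.Perm (Vertex q)} {v z : Vertex q}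
    (h : F.PreservesLetters g v) (hz : Descendant v z) : F.PreservesLetters g z :=
  fun z' hz' hlt => h z' (hz.trans hz') (by linarith [hz.1])

lemma Carries.refl (v : Vertex q) : F.Carries v v :=
  ⟨1, F.P.one_mem, rfl, fun _ _ _ => rfl⟩

lemma Carries.trans {v u w : Vertex q} (h₁ : F.Carries v u) (h₂ : F.Carries u w) :
    F.Carries v w := by
  obtain ⟨g₁, hg₁, rfl, hp₁⟩ := h₁
  obtain ⟨g₂, hg₂, rfl, hp₂⟩ := h₂
  have hi := F.le_isomOmega hg₁
  refine ⟨g₂ * g₁, F.P.mul_mem hg₂ hg₁, rfl, fun z hz hlt => ?_⟩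
  rw [Equiv.Perm.mul_apply, hp₂ _ (IsomOmega.descendant_apply hi hz)
    ((IsomOmega.level_lt_level_apply hi).mpr hlt), hp₁ z hz hlt]

lemma Carries.symm {v u : Vertex q} (h : F.Carries v u) : F.Carries u v := by
  obtain ⟨g, hg, rfl, hp⟩ := h
  have hi := F.le_isomOmega (F.P.inv_mem hg)
  refine ⟨g⁻¹, F.P.inv_mem hg, Equiv.symm_apply_apply g v, fun z hz hlt => ?_⟩
  have hzv := IsomOmega.descendant_apply hi hz
  have hlt' := (IsomOmega.level_lt_level_apply hi).mpr hlt
  rw [show g⁻¹ (g v) = v from Equiv.symm_apply_apply g v] at hzv hlt'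
  have := hp _ hzv hlt'
  rwa [show g (g⁻¹ z) = z from Equiv.apply_symm_apply g z, eq_comm] at this

variable (F)

lemma preservesLetters_transfer {u : Vertex q} (h : 1 ≤ F.depth u) :
    F.PreservesLetters (F.transfer (F.spine 1) ((F.base u).trunc 1)) (F.spine 1) := by
  intro z hz hlt
  set c := (F.base u).trunc 1
  set s := F.transfer (F.spine 1) c
  have hs : s ∈ IsomOmega q := F.transfer_mem_isomOmega _ _
  have hls : lshift s = 0 := F.lshift_transfer (by simp [c])
  rw [level_spine] at hlt
  have h₁ : (s z).trunc 1 = c := by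
    have := IsomOmega.apply_trunc hs (w := z) (m := 1) (by omega)
    rw [hls, add_zero, show z.trunc 1 = F.spine 1 by simpa using hz.2, transfer_apply] at this
    exact this.symm
  have h₀ : (s z).trunc 0 = F.spine 0 := by
    rw [← trunc_trunc (s z) zero_le_one, h₁, trunc_trunc _ zero_le_one, base_trunc_zero]
  have hlevel : (s z).level = z.level := by rw [IsomOmega.level_apply hs, hls, add_zero]
  have hdepth := F.depth_eq_level (by omega) h₀ (h₁ ▸ F.base_trunc_one_ne h)
  have hreduce : F.reduce (s z) = z := by
    rw [reduce, F.base_eq_self hdepth, h₁]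
    exact Equiv.symm_apply_apply s z
  rw [F.letter_of_one_lt_depth (by omega), hreduce]

lemma carries_translation_zpow (k : ℤ) (w : Vertex q) : F.Carries w ((F.translation ^ k) w) :=
  ⟨_, F.translation_zpow_mem k, rfl, fun z _ _ => F.letter_translation_zpow_apply k z⟩

lemma carries_spine (m n : ℤ) : F.Carries (F.spine m) (F.spine n) := by
  simpa [translation_zpow_spine] using F.carries_translation_zpow (n - m) (F.spine m)

/-- By induction on the depth: `F.reduce u` is shallower than `u` and is carried to `F.base u`,
hence to `u`. -/
lemma carries_spine_level (u : Vertex q) : F.Carries (F.spine u.level) u := by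
  induction hd : F.depth u using Nat.strong_induction_on generalizing u with
  | _ d ih =>
    rcases Nat.eq_zero_or_pos d with rfl | hpos
    · have hu : F.spine u.level = u := by simpa [hd, trunc_self] using (F.trunc_depth u).symm
      rw [hu]
      exact Carries.refl u
    have h : 1 ≤ F.depth u := hd ▸ hpos
    have hreduce : F.Carries (F.reduce u) (F.base u) :=
      ⟨_, F.transfer_mem _ _, F.transfer_reduce u,
        (F.preservesLetters_transfer h).descendant (F.descendant_reduce h)⟩
    have hbase : F.Carries (F.base u) u := (F.carries_translation_zpow _ u).symm
    exact (F.carries_spine _ _).trans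
      ((ih _ (hd ▸ F.depth_reduce_lt h) _ rfl).trans (hreduce.trans hbase))

lemma carries (u₁ u₂ : Vertex q) : F.Carries u₁ u₂ :=
  (F.carries_spine_level u₁).symm.trans ((F.carries_spine _ _).trans (F.carries_spine_level u₂))

lemma bijective_letter_child (u : Vertex q) : Function.Bijective fun j => F.letter (u.child j) := by
  obtain ⟨g, hg, hgu, hp⟩ := F.carries u (F.spine 0)
  obtain ⟨σ, hσ⟩ := IsomOmega.exists_perm_child (F.le_isomOmega hg) u
  have : (fun j => F.letter (u.child j)) = σ := funext fun j => by
    rw [← hp _ (descendant_child u j) (by simp), hσ, hgu, letter_spine_zero_child]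
  rw [this]
  exact σ.bijective

open Classical in
noncomputable def labelling (v w : Vertex q) : Fin (q + 1) :=
  if w.parent = v then (F.letter w).castSucc else Fin.last q

lemma labelling_of_parent_eq {v w : Vertex q} (h : w.parent = v) :
    F.labelling v w = (F.letter w).castSucc :=
  if_pos h

lemma labelling_parent (v : Vertex q) : F.labelling v v.parent = Fin.last q :=
  if_neg (parent_parent_ne v)

lemma existsUnique_labelling (v : Vertex q) (j : Fin (q + 1)) :
    ∃! w : Vertex q, (w.parent = v ∨ w = v.parent) ∧ F.labelling v w = j := by
  induction j using Fin.lastCases with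
  | last =>
    refine ⟨v.parent, ⟨Or.inr rfl, F.labelling_parent v⟩, ?_⟩
    rintro w ⟨hw | rfl, hlab⟩
    · rw [F.labelling_of_parent_eq hw] at hlab
      exact absurd hlab (Fin.castSucc_ne_last _)
    · rfl
  | cast i =>
    obtain ⟨k, hk⟩ := (F.bijective_letter_child v).2 i
    refine ⟨v.child k, ⟨Or.inl (parent_child v k), ?_⟩, ?_⟩
    · rw [F.labelling_of_parent_eq (parent_child v k)]
      exact congrArg Fin.castSucc hk
    rintro w ⟨hw | rfl, hlab⟩
    · obtain ⟨l, rfl⟩ : ∃ l, w = v.child l := ⟨_, eq_child_of_parent_eq hw⟩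
      rw [F.labelling_of_parent_eq hw, Fin.castSucc_inj] at hlab
      exact congrArg v.child ((F.bijective_letter_child v).1 (hlab.trans hk.symm))
    · rw [F.labelling_parent] at hlab
      exact absurd hlab.symm (Fin.castSucc_ne_last _)

theorem isPLabelling : IsPLabelling F.P F.labelling F.spine := by
  have hspine : ∀ n, (F.spine (n + 1)).parent = F.spine n := fun n => by
    rw [spine_parent, add_sub_cancel_right]
  refine ⟨F.existsUnique_labelling, fun v => by rw [labelling_parent, Fin.val_last], hspine,
    fun n => ?_, fun u₁ u₂ => ?_⟩
  · rw [F.labelling_of_parent_eq (hspine n), letter_spine]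
    rfl
  obtain ⟨g, hg, hgu, hp⟩ := F.carries u₁ u₂
  have hi := F.le_isomOmega hg
  refine ⟨g, hg, hgu, fun w w' hw hw' hadj => ?_⟩
  rcases hadj with rfl | rfl
  · rw [hi, labelling_parent, labelling_parent]
  · rw [hi w', F.labelling_of_parent_eq rfl, F.labelling_of_parent_eq rfl,
      hp w' hw' (by linarith [hw.1, level_parent w'])]

end TransitiveFrame

end Scale

open Scale in
theorem statement_8_general (q : ℕ) [NeZero q]
    (P : Subgroup (Equiv.Perm (Vertex q))) (hP : IsScaleGroup P) :
    ∃ (c : Vertex q → Vertex q → Fin (q + 1)) (vp : ℤ → Vertex q),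
      IsPLabelling P c vp := by
  obtain ⟨hle, -, htr⟩ := hP
  exact ⟨_, _, (TransitiveFrame.mk P hle htr).isPLabelling⟩

open Scale in
/-- Every scale group admits a `P`-labelling. -/
theorem statement_8 (q : ℕ) [NeZero q] (hq : 2 ≤ q)
    (P : Subgroup (Equiv.Perm (Vertex q))) (hP : IsScaleGroup P) :
    ∃ (c : Vertex q → Vertex q → Fin (q + 1)) (vp : ℤ → Vertex q),
      IsPLabelling P c vp :=
  statement_8_general q P hP
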